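/- arXiv:2604.04065 — 4 statements merged into one kernel-verified Lean document; each statement's English description precedes it below -/
import Mathlib

section
/- Let a and b be positive integers with a ∣ b, and define f : ℕ → ℕ by f(x) = gcd(b, x²). If n is a natural number such that 2^n ≥ e_b(p) for every prime p, where e_b(p) denotes the exponent of p in the prime factorization of b, then the n-th iterate satisfies f^[n](b/a) = alcm_a b. -/
/-!
Each step `x ↦ gcd(b, x²)` doubles every `p`-adic valuation and truncates it at `v_p(b)`. Starting
from `v_p(b / a) = v_p(b) - v_p(a)`, after `n` steps with `2^n ≥ v_p(b)` the valuation is `v_p(b)`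
where `v_p(a) < v_p(b)` and `0` elsewhere. That number `y` satisfies `lcm(a, y) = b` and divides
every `c` with `lcm(a, c) = b`, so it is the least one.
-/

/-- The anti-lcm of `b` with respect to `a`: the smallest positive `c` with `lcm(a, c) = b`. -/
noncomputable def alcm (a b : ℕ) : ℕ := sInf {c : ℕ | 0 < c ∧ Nat.lcm a c = b}

theorem alcm_eq_of_forall_dvd {a b y : ℕ} (hy : 0 < y) (hlcm : Nat.lcm a y = b)
    (hmin : ∀ c, 0 < c → Nat.lcm a c = b → y ∣ c) : alcm a b = y := by
  have hmem : y ∈ {c : ℕ | 0 < c ∧ Nat.lcm a c = b} := ⟨hy, hlcm⟩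
  obtain ⟨hpos, hl⟩ := Nat.sInf_mem ⟨y, hmem⟩
  exact le_antisymm (Nat.sInf_le hmem) (Nat.le_of_dvd hpos (hmin _ hpos hl))

theorem alcm_eq_of_factorization {a b y : ℕ} (hb : b ≠ 0) (hab : a ∣ b) (hy : y ≠ 0)
    (hfy : ∀ p, y.factorization p =
      if a.factorization p < b.factorization p then b.factorization p else 0) :
    alcm a b = y := by
  have ha : a ≠ 0 := ne_zero_of_dvd_ne_zero hb hab
  have hle : ∀ p, a.factorization p ≤ b.factorization p :=
    (Nat.factorization_le_iff_dvd ha hb).2 hab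
  refine alcm_eq_of_forall_dvd (Nat.pos_of_ne_zero hy) ?_ fun c hc hlc => ?_
  · refine Nat.eq_of_factorization_eq (Nat.lcm_ne_zero ha hy) hb fun p => ?_
    rw [Nat.factorization_lcm ha hy, Finsupp.sup_apply, hfy]
    have := hle p
    split_ifs <;> omega
  · refine (Nat.factorization_le_iff_dvd hy hc.ne').1 fun p => ?_
    have hmax := congrArg (·.factorization p) hlc
    simp only [Nat.factorization_lcm ha hc.ne', Finsupp.sup_apply] at hmax
    rw [hfy]
    split_ifs <;> omega

theorem Nat.min_mul_sub_eq_ite {m k : ℕ} (hmk : m ≤ k) (a : ℕ) :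
    min m (k * (m - a)) = if a < m then m else 0 := by
  split_ifs with h
  · exact min_eq_left (hmk.trans (Nat.le_mul_of_pos_right k (by omega)))
  · simp [Nat.sub_eq_zero_of_le (not_lt.1 h)]

section IterateGcdSq

variable {b : ℕ}

theorem iterate_gcd_sq_ne_zero (hb : b ≠ 0) {x : ℕ} (hx : x ≠ 0) :
    ∀ k, (fun x => Nat.gcd b (x ^ 2))^[k] x ≠ 0
  | 0 => hx
  | k + 1 => by
    rw [Function.iterate_succ_apply']
    exact Nat.gcd_ne_zero_left hb

theorem factorization_iterate_gcd_sq (hb : b ≠ 0) {x : ℕ} (hx : x ≠ 0) (hxb : x ∣ b) (k p : ℕ) :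
    ((fun x => Nat.gcd b (x ^ 2))^[k] x).factorization p =
      min (b.factorization p) (2 ^ k * x.factorization p) := by
  induction k with
  | zero => simpa using (Nat.factorization_le_iff_dvd hx hb).2 hxb p
  | succ k ih =>
    rw [Function.iterate_succ_apply',
      Nat.factorization_gcd hb (pow_ne_zero 2 (iterate_gcd_sq_ne_zero hb hx k))]
    simp only [Finsupp.inf_apply, Nat.factorization_pow, Finsupp.smul_apply, smul_eq_mul, ih,
      pow_succ 2 k, mul_comm (2 ^ k) 2, mul_assoc]
    omega

end IterateGcdSq

theorem iterate_gcd_sq_eq_alcm_general (a b n : ℕ) (hb : 0 < b) (hab : a ∣ b)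
    (hn : ∀ p : ℕ, p.Prime → b.factorization p ≤ 2 ^ n) :
    (fun x => Nat.gcd b (x ^ 2))^[n] (b / a) = alcm a b := by
  have hx : b / a ≠ 0 := (Nat.div_pos (Nat.le_of_dvd hb hab) (Nat.pos_of_dvd_of_pos hab hb)).ne'
  refine (alcm_eq_of_factorization hb.ne' hab (iterate_gcd_sq_ne_zero hb.ne' hx n) fun p => ?_).symm
  rw [factorization_iterate_gcd_sq hb.ne' hx (Nat.div_dvd_of_dvd hab), Nat.factorization_div hab,
    Finsupp.tsub_apply]
  by_cases hp : p.Prime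
  · exact Nat.min_mul_sub_eq_ite (hn p hp) _
  · simp [Nat.factorization_eq_zero_of_not_prime _ hp]

/-- for `0 < a ∣ b` and `f x = gcd(b, x²)`, if `2^n` bounds every prime
exponent of `b`, then `f^[n](b/a) = alcm a b`. -/
theorem iterate_gcd_sq_eq_alcm (a b n : ℕ) (ha : 0 < a) (hb : 0 < b) (hab : a ∣ b)
    (hn : ∀ p : ℕ, p.Prime → b.factorization p ≤ 2 ^ n) :
    (fun x => Nat.gcd b (x ^ 2))^[n] (b / a) = alcm a b :=
  iterate_gcd_sq_eq_alcm_general a b n hb hab hn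
end

section
/- Let P(X) = Σ_{j=0}^k A_j X^j be a polynomial over the permutations such that at least one non-constant coefficient A_j with j ≥ 1 contains the element 1 (a fixed point). Let X be a nonempty permutation with elements listed in nondecreasing order x_1 ≤ x_2 ≤ … ≤ x_m, and let 0 ≤ i < m. Then P(pref_i(X)) is a submultiset of P(X), and the minimum element of the multiset difference P(X) − P(pref_i(X)) equals x_{i+1}. -/
/-!
Write `X = P + R`, where `P = pref_i X` and `R` holds the remaining elements, all at least
`x = x_{i+1}`. Expanding `(P + R)^n = P^n + Q_n`, every element of `Q_n` is an lcm with an argument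
in `R`, hence a multiple of an element of `R`, so it is at least `x`; and for `n ≥ 1` the element
`x = lcm(x, b)` (with `b ∈ X^{n-1}` dividing `x`) lies in `Q_n`. Thus `P(X) - P(P) = Σ_j A_j Q_j`,
all of whose elements are multiples of elements of `R`, and a fixed point `1 ∈ A_j` with `j ≥ 1`
contributes `lcm(1, x) = x`.
-/

/-- Product of permutations (multisets of cycle lengths): each pair `(a, b)` contributes
`gcd(a, b)` copies of `lcm(a, b)`. -/
def pmul (A B : Multiset ℕ) : Multiset ℕ :=
  A.bind fun a => B.bind fun b => Multiset.replicate (Nat.gcd a b) (Nat.lcm a b)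

/-- Powers in the permutation semiring; `X^0` is the singleton `{1}`. -/
def ppow (A : Multiset ℕ) : ℕ → Multiset ℕ
  | 0 => {1}
  | n + 1 => pmul A (ppow A n)

/-- Evaluation of the polynomial `Σ_{i=0}^m A_i X^i` over the permutation semiring. -/
def peval (A : ℕ → Multiset ℕ) (m : ℕ) (X : Multiset ℕ) : Multiset ℕ :=
  (Finset.range (m + 1)).sum fun i => pmul (A i) (ppow X i)

/-- A permutation is a multiset of positive natural numbers (cycle lengths). -/
def IsPerm (A : Multiset ℕ) : Prop := ∀ x ∈ A, 0 < x

section Product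

variable {A B C : Multiset ℕ}

lemma mem_pmul {y : ℕ} :
    y ∈ pmul A B ↔ ∃ a ∈ A, ∃ b ∈ B, 0 < Nat.gcd a b ∧ y = Nat.lcm a b := by
  simp only [pmul, Multiset.mem_bind, Multiset.mem_replicate, Nat.pos_iff_ne_zero]

lemma lcm_mem_pmul {a b : ℕ} (ha : a ∈ A) (hb : b ∈ B) (hab : 0 < Nat.gcd a b) :
    Nat.lcm a b ∈ pmul A B :=
  mem_pmul.mpr ⟨a, ha, b, hb, hab, rfl⟩

lemma mem_pmul_of_dvd {a b : ℕ} (ha : a ∈ A) (hb : b ∈ B) (hba : b ∣ a) (hb0 : 0 < b) :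
    a ∈ pmul A B := by
  simpa only [Nat.lcm_eq_left hba] using lcm_mem_pmul ha hb (by rwa [Nat.gcd_eq_right hba])

lemma exists_dvd_of_mem_pmul_left {y : ℕ} (hy : y ∈ pmul A B) : ∃ a ∈ A, a ∣ y := by
  obtain ⟨a, ha, b, -, -, rfl⟩ := mem_pmul.mp hy
  exact ⟨a, ha, Nat.dvd_lcm_left a b⟩

lemma exists_dvd_of_mem_pmul_right {y : ℕ} (hy : y ∈ pmul A B) : ∃ b ∈ B, b ∣ y := by
  obtain ⟨a, -, b, hb, -, rfl⟩ := mem_pmul.mp hy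
  exact ⟨b, hb, Nat.dvd_lcm_right a b⟩

lemma pmul_add_left : pmul (A + B) C = pmul A C + pmul B C :=
  Multiset.add_bind _ _ _

lemma pmul_add_right : pmul A (B + C) = pmul A B + pmul A C := by
  simp only [pmul, Multiset.add_bind, Multiset.bind_add]

end Product

section Positivity

variable {A B : Multiset ℕ}

lemma IsPerm.pmul (hA : IsPerm A) (hB : IsPerm B) : IsPerm (pmul A B) := by
  intro y hy
  obtain ⟨a, ha, b, hb, -, rfl⟩ := mem_pmul.mp hy
  exact Nat.lcm_pos (hA a ha) (hB b hb)

lemma IsPerm.ppow (hA : IsPerm A) (n : ℕ) : IsPerm (ppow A n) := by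
  induction n with
  | zero => simp [IsPerm, _root_.ppow]
  | succ n ih => exact hA.pmul ih

lemma IsPerm.peval {A : ℕ → Multiset ℕ} {k : ℕ} (hA : ∀ j ≤ k, IsPerm (A j)) (hB : IsPerm B) :
    IsPerm (peval A k B) := by
  intro y hy
  obtain ⟨j, hj, hy⟩ := Multiset.mem_sum.mp hy
  exact (hA j (Nat.lt_succ_iff.mp (Finset.mem_range.mp hj))).pmul (hB.ppow j) y hy

end Positivity

lemma exists_mem_ppow_dvd {X : Multiset ℕ} {x : ℕ} (hx : x ∈ X) (hx0 : 0 < x) (n : ℕ) :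
    ∃ b ∈ ppow X n, b ∣ x := by
  induction n with
  | zero => exact ⟨1, Multiset.mem_singleton_self 1, one_dvd x⟩
  | succ n ih =>
    obtain ⟨b, hb, hbx⟩ := ih
    exact ⟨x, mem_pmul_of_dvd hx hb hbx (Nat.pos_of_dvd_of_pos hbx hx0), dvd_rfl⟩

/-- The terms of `(P + R)^n` with at least one factor from `R`. -/
def ppowAddRem (P R : Multiset ℕ) : ℕ → Multiset ℕ
  | 0 => 0
  | n + 1 => pmul P (ppowAddRem P R n) + pmul R (ppow (P + R) n)

section Remainder

variable {P R : Multiset ℕ}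

lemma ppow_add_eq (n : ℕ) :
    ppow (P + R) n = ppow P n + ppowAddRem P R n := by
  induction n with
  | zero => simp [ppow, ppowAddRem]
  | succ n ih =>
    calc ppow (P + R) (n + 1)
        = pmul P (ppow P n + ppowAddRem P R n) + pmul R (ppow (P + R) n) := by
          rw [ppow, pmul_add_left, ← ih]
      _ = ppow P (n + 1) + ppowAddRem P R (n + 1) := by
          rw [pmul_add_right, ppow, ppowAddRem, add_assoc]

lemma exists_dvd_of_mem_ppowAddRem {n y : ℕ} (hy : y ∈ ppowAddRem P R n) :
    ∃ r ∈ R, r ∣ y := by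
  induction n generalizing y with
  | zero => simp [ppowAddRem] at hy
  | succ n ih =>
    rcases Multiset.mem_add.mp hy with hy | hy
    · obtain ⟨q, hq, hqy⟩ := exists_dvd_of_mem_pmul_right hy
      obtain ⟨r, hr, hrq⟩ := ih hq
      exact ⟨r, hr, hrq.trans hqy⟩
    · exact exists_dvd_of_mem_pmul_left hy

lemma mem_ppowAddRem_succ {x : ℕ} (hx : x ∈ R) (hx0 : 0 < x) (n : ℕ) :
    x ∈ ppowAddRem P R (n + 1) := by
  obtain ⟨b, hb, hbx⟩ := exists_mem_ppow_dvd (Multiset.mem_add.mpr (Or.inr hx)) hx0 n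
  exact Multiset.mem_add.mpr
    (Or.inr (mem_pmul_of_dvd hx hb hbx (Nat.pos_of_dvd_of_pos hbx hx0)))

end Remainder

section Polynomial

variable (A : ℕ → Multiset ℕ) (k : ℕ) (P R : Multiset ℕ)

lemma peval_add_eq :
    peval A k (P + R) =
      peval A k P + (Finset.range (k + 1)).sum fun j => pmul (A j) (ppowAddRem P R j) := by
  simp only [peval, ppow_add_eq, pmul_add_right, Finset.sum_add_distrib]

lemma peval_le_peval_add : peval A k P ≤ peval A k (P + R) := by
  rw [peval_add_eq]
  exact Multiset.le_add_right _ _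

lemma peval_add_sub_eq :
    peval A k (P + R) - peval A k P =
      (Finset.range (k + 1)).sum fun j => pmul (A j) (ppowAddRem P R j) := by
  rw [peval_add_eq, add_tsub_cancel_left]

variable {A k P R}

lemma mem_peval_add_sub {x : ℕ} (hfix : ∃ j, 1 ≤ j ∧ j ≤ k ∧ (1 : ℕ) ∈ A j)
    (hx : x ∈ R) (hx0 : 0 < x) : x ∈ peval A k (P + R) - peval A k P := by
  obtain ⟨j, hj1, hjk, h1⟩ := hfix
  obtain ⟨n, rfl⟩ := Nat.exists_eq_add_of_le' hj1
  have hxj : x ∈ pmul (A (n + 1)) (ppowAddRem P R (n + 1)) := by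
    simpa only [Nat.lcm_one_left] using
      lcm_mem_pmul h1 (mem_ppowAddRem_succ hx hx0 n) (by simp)
  rw [peval_add_sub_eq]
  exact Multiset.mem_sum.mpr ⟨n + 1, Finset.mem_range.mpr (by omega), hxj⟩

lemma le_of_mem_peval_add_sub {x y : ℕ} (hA : ∀ j ≤ k, IsPerm (A j)) (hX : IsPerm (P + R))
    (hR : ∀ r ∈ R, x ≤ r) (hy : y ∈ peval A k (P + R) - peval A k P) : x ≤ y := by
  have hy0 : 0 < y := IsPerm.peval hA hX y (Multiset.mem_of_le tsub_le_self hy)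
  rw [peval_add_sub_eq] at hy
  obtain ⟨j, -, hy⟩ := Multiset.mem_sum.mp hy
  obtain ⟨q, hq, hqy⟩ := exists_dvd_of_mem_pmul_right hy
  obtain ⟨r, hr, hrq⟩ := exists_dvd_of_mem_ppowAddRem hq
  exact (hR r hr).trans (Nat.le_of_dvd hy0 (hrq.trans hqy))

end Polynomial

lemma List.getElem_le_of_mem_drop {l : List ℕ} (hl : l.Pairwise (· ≤ ·)) {i : ℕ}
    (hi : i < l.length) {y : ℕ} (hy : y ∈ l.drop i) : l[i] ≤ y := by
  have hsorted := hl.drop (i := i)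
  rw [List.drop_eq_getElem_cons hi] at hy hsorted
  rcases List.mem_cons.mp hy with rfl | hy
  · exact le_rfl
  · exact List.rel_of_pairwise_cons hsorted hy

/-- let `P(X) = Σ_{j=0}^k A_j X^j` be a polynomial over the permutations with
a fixed point (the element `1`) in some non-constant coefficient. Let `X` be a nonempty
permutation whose elements, in nondecreasing order, are given by the sorted list `l`
(so `x_{i+1} = l.get i`), and let `i < m`. Then `P(pref_i X)` is a submultiset of `P(X)`,
and the minimum element of the multiset difference `P(X) − P(pref_i X)` is `x_{i+1}`. -/
theorem peval_prefix_min (A : ℕ → Multiset ℕ) (k : ℕ) (hA : ∀ j ≤ k, IsPerm (A j))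
    (hfix : ∃ j, 1 ≤ j ∧ j ≤ k ∧ (1 : ℕ) ∈ A j)
    (l : List ℕ) (hl : l.Pairwise (· ≤ ·)) (hpos : ∀ x ∈ l, 0 < x)
    (i : ℕ) (hi : i < l.length) :
    peval A k (↑(l.take i)) ≤ peval A k (↑l) ∧
    l.get ⟨i, hi⟩ ∈ peval A k (↑l) - peval A k (↑(l.take i)) ∧
    ∀ y ∈ peval A k (↑l) - peval A k (↑(l.take i)), l.get ⟨i, hi⟩ ≤ y := by
  have hsplit : (↑l : Multiset ℕ) = ↑(l.take i) + ↑(l.drop i) := by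
    rw [Multiset.coe_add, List.take_append_drop]
  have hx : l[i] ∈ l.drop i := by
    rw [List.drop_eq_getElem_cons hi]
    exact List.mem_cons_self
  have hX : IsPerm (↑l : Multiset ℕ) := fun y hy => hpos y (Multiset.mem_coe.mp hy)
  rw [List.get_eq_getElem, hsplit]
  rw [hsplit] at hX
  exact ⟨peval_le_peval_add A k _ _,
    mem_peval_add_sub hfix (Multiset.mem_coe.mpr hx) (hpos _ (List.getElem_mem hi)),
    fun y hy => le_of_mem_peval_add_sub hA hX
      (fun r hr => List.getElem_le_of_mem_drop hl hi (Multiset.mem_coe.mp hr)) hy⟩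
end

section
/- Let A be a nonempty permutation all of whose elements are at least 2 (i.e., A contains no fixed point). Then for every integer k > 0 there exist two distinct permutations X and Y such that A·X^k = A·Y^k. -/
/-- The number of points fixed by the `m`-th iterate of the permutation `X`. -/
def countPeriodicPts (m : ℕ) (X : Multiset ℕ) : ℕ :=
  (X.map fun d => if d ∣ m then d else 0).sum

section countPeriodicPts

variable (m : ℕ)

@[simp]
lemma countPeriodicPts_zero : countPeriodicPts m 0 = 0 := rfl

@[simp]
lemma countPeriodicPts_add (X Y : Multiset ℕ) :
    countPeriodicPts m (X + Y) = countPeriodicPts m X + countPeriodicPts m Y := by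
  simp [countPeriodicPts]

@[simp]
lemma countPeriodicPts_cons (a : ℕ) (X : Multiset ℕ) :
    countPeriodicPts m (a ::ₘ X) = (if a ∣ m then a else 0) + countPeriodicPts m X := by
  simp [countPeriodicPts]

@[simp]
lemma countPeriodicPts_singleton (a : ℕ) :
    countPeriodicPts m {a} = if a ∣ m then a else 0 := by
  simp [countPeriodicPts]

@[simp]
lemma countPeriodicPts_nsmul (n : ℕ) (X : Multiset ℕ) :
    countPeriodicPts m (n • X) = n * countPeriodicPts m X := by
  simp [countPeriodicPts, Multiset.map_nsmul, Multiset.sum_nsmul]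

@[simp]
lemma countPeriodicPts_replicate (n d : ℕ) :
    countPeriodicPts m (Multiset.replicate n d) = n * (if d ∣ m then d else 0) := by
  simp [countPeriodicPts, Multiset.map_replicate]

lemma gcd_mul_ite_lcm_dvd (a b : ℕ) :
    Nat.gcd a b * (if Nat.lcm a b ∣ m then Nat.lcm a b else 0)
      = (if a ∣ m then a else 0) * (if b ∣ m then b else 0) := by
  by_cases ha : a ∣ m
  · by_cases hb : b ∣ m
    · rw [if_pos ha, if_pos hb, if_pos (Nat.lcm_dvd ha hb), Nat.gcd_mul_lcm]
    · rw [if_neg hb, mul_zero, if_neg fun h => hb ((Nat.dvd_lcm_right a b).trans h), mul_zero]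
  · rw [if_neg ha, zero_mul, if_neg fun h => ha ((Nat.dvd_lcm_left a b).trans h), mul_zero]

lemma countPeriodicPts_pmul_singleton (a : ℕ) (B : Multiset ℕ) :
    countPeriodicPts m (pmul {a} B) = (if a ∣ m then a else 0) * countPeriodicPts m B := by
  induction B using Multiset.induction with
  | empty => simp [pmul]
  | cons b B ih =>
    simp only [pmul, Multiset.singleton_bind, Multiset.cons_bind] at ih ⊢
    rw [countPeriodicPts_add, ih, countPeriodicPts_replicate, gcd_mul_ite_lcm_dvd,
      countPeriodicPts_cons, mul_add]

lemma countPeriodicPts_pmul (A B : Multiset ℕ) :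
    countPeriodicPts m (pmul A B) = countPeriodicPts m A * countPeriodicPts m B := by
  induction A using Multiset.induction with
  | empty => simp [pmul]
  | cons a A ih =>
    have hsplit : pmul (a ::ₘ A) B = pmul {a} B + pmul A B := by
      simp [pmul, Multiset.cons_bind]
    rw [hsplit, countPeriodicPts_add, ih, countPeriodicPts_pmul_singleton, countPeriodicPts_cons,
      add_mul]

lemma countPeriodicPts_ppow (X : Multiset ℕ) (k : ℕ) :
    countPeriodicPts m (ppow X k) = countPeriodicPts m X ^ k := by
  induction k with
  | zero => simp [ppow]
  | succ k ih => rw [ppow, countPeriodicPts_pmul, ih, pow_succ']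

lemma exists_dvd_of_countPeriodicPts_ne_zero {A : Multiset ℕ} (h : countPeriodicPts m A ≠ 0) :
    ∃ a ∈ A, a ∣ m := by
  by_contra! hA
  refine h (Multiset.sum_eq_zero fun x hx => ?_)
  obtain ⟨a, ha, rfl⟩ := Multiset.mem_map.mp hx
  exact if_neg (hA a ha)

lemma countPeriodicPts_eq_sum_divisors (hm : m ≠ 0) (X : Multiset ℕ) :
    countPeriodicPts m X = ∑ e ∈ m.divisors, e * X.count e := by
  induction X using Multiset.induction with
  | empty => simp
  | cons a X ih =>
    have count_cons : ∀ e ∈ m.divisors,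
        e * (a ::ₘ X).count e = e * X.count e + if e = a then e else 0 := by
      intro e _
      by_cases h : e = a <;> simp [h, Nat.mul_add]
    rw [countPeriodicPts_cons, ih, Finset.sum_congr rfl count_cons, Finset.sum_add_distrib,
      Finset.sum_ite_eq', add_comm]
    simp [hm]

end countPeriodicPts

lemma eq_of_countPeriodicPts_eq {X Y : Multiset ℕ} (hX : IsPerm X) (hY : IsPerm Y)
    (h : ∀ m, m ≠ 0 → countPeriodicPts m X = countPeriodicPts m Y) : X = Y := by
  have count_eq : ∀ d, d ≠ 0 → X.count d = Y.count d := by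
    intro d
    induction d using Nat.strong_induction_on with
    | _ d ih =>
      intro hd
      have hsum := h d hd
      rw [countPeriodicPts_eq_sum_divisors d hd, countPeriodicPts_eq_sum_divisors d hd,
        ← Nat.insert_self_properDivisors hd,
        Finset.sum_insert Nat.self_notMem_properDivisors,
        Finset.sum_insert Nat.self_notMem_properDivisors,
        Finset.sum_congr rfl fun e he => by
          rw [ih e (Nat.mem_properDivisors.mp he).2 (Nat.pos_of_mem_properDivisors he).ne']]
        at hsum
      exact Nat.eq_of_mul_eq_mul_left (Nat.pos_of_ne_zero hd) (Nat.add_right_cancel hsum)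
  refine Multiset.ext.mpr fun d => ?_
  rcases eq_or_ne d 0 with rfl | hd
  · rw [Multiset.count_eq_zero_of_notMem fun h0 => (hX 0 h0).ne rfl,
      Multiset.count_eq_zero_of_notMem fun h0 => (hY 0 h0).ne rfl]
  · exact count_eq d hd

lemma isPerm_pmul {A B : Multiset ℕ} (hA : IsPerm A) (hB : IsPerm B) : IsPerm (pmul A B) := by
  intro x hx
  obtain ⟨a, ha, hx⟩ := Multiset.mem_bind.mp hx
  obtain ⟨b, hb, hx⟩ := Multiset.mem_bind.mp hx
  rw [Multiset.eq_of_mem_replicate hx]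
  exact Nat.pos_of_ne_zero (Nat.lcm_ne_zero (hA a ha).ne' (hB b hb).ne')

lemma isPerm_ppow {X : Multiset ℕ} (hX : IsPerm X) (k : ℕ) : IsPerm (ppow X k) := by
  induction k with
  | zero => simp [IsPerm, ppow]
  | succ k ih => exact isPerm_pmul hX ih

lemma IsPerm.add {X Y : Multiset ℕ} (hX : IsPerm X) (hY : IsPerm Y) : IsPerm (X + Y) := by
  intro x hx
  rcases Multiset.mem_add.mp hx with hx | hx
  exacts [hX x hx, hY x hx]

lemma IsPerm.nsmul {X : Multiset ℕ} (hX : IsPerm X) (n : ℕ) : IsPerm (n • X) :=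
  fun x hx => hX x (Multiset.mem_nsmul.mp hx).2

/-- The terms of the expansion of `∏_{a ∈ l} (a·{1} - {a})` with an even, respectively odd,
number of factors `{a}`. -/
def parityParts : List ℕ → Multiset ℕ × Multiset ℕ
  | [] => ({1}, 0)
  | a :: l => (a • (parityParts l).1 + pmul {a} (parityParts l).2,
      a • (parityParts l).2 + pmul {a} (parityParts l).1)

lemma isPerm_parityParts {l : List ℕ} (hl : ∀ a ∈ l, 0 < a) :
    IsPerm (parityParts l).1 ∧ IsPerm (parityParts l).2 := by
  induction l with
  | nil => simp [IsPerm, parityParts]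
  | cons a l ih =>
    obtain ⟨hE, hO⟩ := ih fun b hb => hl b (List.mem_cons_of_mem a hb)
    have ha : IsPerm {a} := by simpa [IsPerm] using hl a List.mem_cons_self
    exact ⟨(hE.nsmul a).add (isPerm_pmul ha hO), (hO.nsmul a).add (isPerm_pmul ha hE)⟩

lemma countPeriodicPts_parityParts_fst_sub_snd (m : ℕ) (l : List ℕ) :
    (countPeriodicPts m (parityParts l).1 : ℤ) - countPeriodicPts m (parityParts l).2
      = (l.map fun a => if a ∣ m then 0 else (a : ℤ)).prod := by
  induction l with
  | nil => simp [parityParts]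
  | cons a l ih =>
    simp only [parityParts, countPeriodicPts_add, countPeriodicPts_nsmul,
      countPeriodicPts_pmul_singleton, List.map_cons, List.prod_cons, ← ih]
    split_ifs <;> push_cast <;> ring

lemma countPeriodicPts_parityParts_fst_eq_snd {m : ℕ} {l : List ℕ} (h : ∃ a ∈ l, a ∣ m) :
    countPeriodicPts m (parityParts l).1 = countPeriodicPts m (parityParts l).2 := by
  obtain ⟨a, ha, ham⟩ := h
  have hzero : (l.map fun a => if a ∣ m then 0 else (a : ℤ)).prod = 0 :=
    List.prod_eq_zero (List.mem_map.mpr ⟨a, ha, if_pos ham⟩)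
  rw [← countPeriodicPts_parityParts_fst_sub_snd, sub_eq_zero] at hzero
  exact_mod_cast hzero

lemma parityParts_fst_ne_snd {l : List ℕ} (hl : ∀ a ∈ l, 1 < a) :
    (parityParts l).1 ≠ (parityParts l).2 := by
  intro h
  have hprod := countPeriodicPts_parityParts_fst_sub_snd 1 l
  rw [h, sub_self, eq_comm] at hprod
  refine List.prod_ne_zero (fun h0 => ?_) hprod
  obtain ⟨a, ha, h0⟩ := List.mem_map.mp h0
  have ha1 := hl a ha
  rw [if_neg fun h1 => ha1.ne' (Nat.dvd_one.mp h1)] at h0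
  omega

theorem monomial_not_injective_general (A : Multiset ℕ) (h2 : ∀ x ∈ A, 2 ≤ x) :
    ∀ k : ℕ, 0 < k → ∃ X Y : Multiset ℕ, IsPerm X ∧ IsPerm Y ∧ X ≠ Y ∧
      pmul A (ppow X k) = pmul A (ppow Y k) := by
  intro k _
  have hl : ∀ a ∈ A.toList, 1 < a := fun a ha => h2 a (Multiset.mem_toList.mp ha)
  have hA : IsPerm A := fun a ha => Nat.zero_lt_of_lt (h2 a ha)
  obtain ⟨hE, hO⟩ := isPerm_parityParts fun a ha => Nat.zero_lt_of_lt (hl a ha)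
  refine ⟨_, _, hE, hO, parityParts_fst_ne_snd hl, eq_of_countPeriodicPts_eq
    (isPerm_pmul hA (isPerm_ppow hE k)) (isPerm_pmul hA (isPerm_ppow hO k)) fun m _ => ?_⟩
  rw [countPeriodicPts_pmul, countPeriodicPts_pmul, countPeriodicPts_ppow, countPeriodicPts_ppow]
  rcases eq_or_ne (countPeriodicPts m A) 0 with hAm | hAm
  · rw [hAm, zero_mul, zero_mul]
  · obtain ⟨a, ha, ham⟩ := exists_dvd_of_countPeriodicPts_ne_zero m hAm
    rw [countPeriodicPts_parityParts_fst_eq_snd ⟨a, Multiset.mem_toList.mpr ha, ham⟩]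

/-- if `A` is a nonempty permutation without fixed points (all elements at
least `2`), then for every `k > 0` there are distinct permutations `X ≠ Y` with
`A·X^k = A·Y^k`. -/
theorem monomial_not_injective (A : Multiset ℕ) (hA : A ≠ 0) (h2 : ∀ x ∈ A, 2 ≤ x) :
    ∀ k : ℕ, 0 < k → ∃ X Y : Multiset ℕ, IsPerm X ∧ IsPerm Y ∧ X ≠ Y ∧
      pmul A (ppow X k) = pmul A (ppow Y k) :=
  monomial_not_injective_general A h2
end

section
/- Let A and X be permutations with A pseudo-cancelable and X nonempty, and let B = A·X (which is nonempty). Then ℓ(A) divides ℓ(B), and there exists a divisor d of ℓ(A) that is coprime with alcm_{ℓ(A)} ℓ(B) such that the integer d · alcm_{ℓ(A)} ℓ(B) is an element of X. -/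
/-- `ell X` is the minimum element of the (nonempty) multiset `X`. -/
noncomputable def ell (X : Multiset ℕ) : ℕ := sInf {x : ℕ | x ∈ X}

/-- A nonempty permutation `A` is pseudo-cancelable if every element of `A` is a
multiple of its minimum `ell A`. -/
def PseudoCancelable (A : Multiset ℕ) : Prop := A ≠ 0 ∧ ∀ x ∈ A, ell A ∣ x

/-
Since `ℓ(A)` divides every cycle length of `A`, the length `lcm(α, x)` of a cycle of `A·X` is a
multiple of `lcm(ℓ(A), x)`, which is itself a cycle length of `A·X`; hence
`ℓ(A·X) = lcm(ℓ(A), x)` for some `x ∈ X`. The rest is arithmetic in prime exponents: for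
`a = ℓ(A)` and `L = lcm(a, x)`, the anti-lcm `m = alcm_a L` has `v_p(m) = v_p(L)` when
`v_p(a) < v_p(L)` and `v_p(m) = 0` otherwise (dropping a prime power that `a` already covers
keeps the lcm, so a minimal `m` has none). Then `m ∣ x`, and `d = x / m` consists of the primes
where `v_p(x) ≤ v_p(a)`, so `d ∣ a` and `d` is coprime with `m`.
-/

namespace Nat

lemma factorization_lcm_apply {a b : ℕ} (ha : a ≠ 0) (hb : b ≠ 0) (p : ℕ) :
    (lcm a b).factorization p = max (a.factorization p) (b.factorization p) := by
  rw [factorization_lcm ha hb, Finsupp.sup_apply]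

lemma lcm_ordCompl_of_factorization_le {a c p : ℕ} (ha : a ≠ 0) (hc : c ≠ 0)
    (h : c.factorization p ≤ a.factorization p) : lcm a (ordCompl[p] c) = lcm a c := by
  apply eq_of_factorization_eq (lcm_ne_zero ha (ordCompl_pos p hc).ne') (lcm_ne_zero ha hc)
  intro q
  rw [factorization_lcm_apply ha (ordCompl_pos p hc).ne', factorization_lcm_apply ha hc,
    factorization_ordCompl]
  rcases eq_or_ne q p with rfl | hqp
  · simp [h]
  · rw [Finsupp.erase_ne hqp]

end Nat

lemma alcm_spec {a c L : ℕ} (hc : 0 < c) (h : Nat.lcm a c = L) :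
    0 < alcm a L ∧ Nat.lcm a (alcm a L) = L :=
  Nat.sInf_mem (s := {c | 0 < c ∧ Nat.lcm a c = L}) ⟨c, hc, h⟩

lemma alcm_le {a c L : ℕ} (hc : 0 < c) (h : Nat.lcm a c = L) : alcm a L ≤ c :=
  Nat.sInf_le ⟨hc, h⟩

lemma alcm_lcm_pos {a x : ℕ} (hx : x ≠ 0) : 0 < alcm a (Nat.lcm a x) :=
  (alcm_spec (Nat.pos_of_ne_zero hx) rfl).1

lemma factorization_alcm_lcm {a x : ℕ} (ha : a ≠ 0) (hx : x ≠ 0) (p : ℕ) :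
    (alcm a (Nat.lcm a x)).factorization p =
      if a.factorization p < (Nat.lcm a x).factorization p then
        (Nat.lcm a x).factorization p
      else 0 := by
  obtain ⟨hm, hlcm⟩ := alcm_spec (Nat.pos_of_ne_zero hx) rfl
  set m := alcm a (Nat.lcm a x)
  have hL := Nat.factorization_lcm_apply ha hm.ne' p
  rw [hlcm] at hL
  by_cases hmp : m.factorization p = 0
  · rw [hmp, if_neg (by omega)]
  have hp : p.Prime := by_contra fun hp => hmp (Nat.factorization_eq_zero_of_not_prime _ hp)
  suffices a.factorization p < (Nat.lcm a x).factorization p by rw [if_pos this]; omega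
  by_contra! hLa
  have hcompl_lt : ordCompl[p] m < m :=
    lt_of_le_of_ne (Nat.ordCompl_le _ p) fun h =>
      ((Nat.ordCompl_eq_self_iff_zero_or_not_dvd _ hp).mp h).elim hm.ne'
        (· (Nat.dvd_of_factorization_pos hmp))
  have hcompl_lcm : Nat.lcm a (ordCompl[p] m) = Nat.lcm a x := by
    rw [Nat.lcm_ordCompl_of_factorization_le ha hm.ne' (by omega), hlcm]
  exact hcompl_lt.not_ge (alcm_le (Nat.ordCompl_pos p hm.ne') hcompl_lcm)

lemma alcm_lcm_dvd {a x : ℕ} (ha : a ≠ 0) (hx : x ≠ 0) : alcm a (Nat.lcm a x) ∣ x := by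
  rw [← Nat.factorization_le_iff_dvd (alcm_lcm_pos hx).ne' hx]
  intro p
  have hL := Nat.factorization_lcm_apply ha hx p
  rw [factorization_alcm_lcm ha hx]
  split_ifs <;> omega

lemma factorization_div_alcm_lcm {a x : ℕ} (ha : a ≠ 0) (hx : x ≠ 0) (p : ℕ) :
    (x / alcm a (Nat.lcm a x)).factorization p =
      if a.factorization p < x.factorization p then 0 else x.factorization p := by
  rw [Nat.factorization_div (alcm_lcm_dvd ha hx), Finsupp.tsub_apply, factorization_alcm_lcm ha hx,
    Nat.factorization_lcm_apply ha hx]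
  split_ifs <;> omega

lemma exists_dvd_coprime_mul_alcm_lcm_eq {a x : ℕ} (ha : a ≠ 0) (hx : x ≠ 0) :
    ∃ d, d ∣ a ∧ Nat.Coprime d (alcm a (Nat.lcm a x)) ∧ d * alcm a (Nat.lcm a x) = x := by
  have hm : 0 < alcm a (Nat.lcm a x) := alcm_lcm_pos hx
  have hmx := alcm_lcm_dvd ha hx
  have hd : x / alcm a (Nat.lcm a x) ≠ 0 :=
    (Nat.div_pos (Nat.le_of_dvd (Nat.pos_of_ne_zero hx) hmx) hm).ne'
  refine ⟨x / alcm a (Nat.lcm a x), ?_, ?_, Nat.div_mul_cancel hmx⟩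
  · rw [← Nat.factorization_le_iff_dvd hd ha]
    intro p
    rw [factorization_div_alcm_lcm ha hx]
    split_ifs <;> omega
  · refine Nat.coprime_of_dvd fun p hp hpd hpm => ?_
    have hpd' := hp.factorization_pos_of_dvd hd hpd
    have hpm' := hp.factorization_pos_of_dvd hm.ne' hpm
    rw [factorization_div_alcm_lcm ha hx] at hpd'
    rw [factorization_alcm_lcm ha hx, Nat.factorization_lcm_apply ha hx] at hpm'
    split_ifs at hpd' hpm' <;> omega

lemma ell_mem {X : Multiset ℕ} (hX : X ≠ 0) : ell X ∈ X :=
  Nat.sInf_mem (Multiset.exists_mem_of_ne_zero hX)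

lemma ell_le {X : Multiset ℕ} {x : ℕ} (hx : x ∈ X) : ell X ≤ x :=
  Nat.sInf_le hx

lemma mem_pmul_s14 {A X : Multiset ℕ} (hA : IsPerm A) {y : ℕ} :
    y ∈ pmul A X ↔ ∃ α ∈ A, ∃ x ∈ X, Nat.lcm α x = y := by
  simp only [pmul, Multiset.mem_bind, Multiset.mem_replicate]
  constructor
  · rintro ⟨α, hα, x, hx, -, rfl⟩
    exact ⟨α, hα, x, hx, rfl⟩
  · rintro ⟨α, hα, x, hx, rfl⟩
    exact ⟨α, hα, x, hx, Nat.gcd_ne_zero_left (hA α hα).ne', rfl⟩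

lemma exists_lcm_ell_eq_ell_pmul {A X : Multiset ℕ} (hA : IsPerm A) (hX : IsPerm X)
    (hpc : PseudoCancelable A) (hXne : X ≠ 0) :
    ∃ x ∈ X, Nat.lcm (ell A) x = ell (pmul A X) := by
  have hlcm_mem {x} (hx : x ∈ X) : Nat.lcm (ell A) x ∈ pmul A X :=
    (mem_pmul_s14 hA).2 ⟨_, ell_mem hpc.1, x, hx, rfl⟩
  obtain ⟨x₀, hx₀⟩ := Multiset.exists_mem_of_ne_zero hXne
  have hne : pmul A X ≠ 0 := fun h => Multiset.notMem_zero _ (h ▸ hlcm_mem hx₀)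
  obtain ⟨α, hα, x, hx, hαx⟩ := (mem_pmul_s14 hA).1 (ell_mem hne)
  refine ⟨x, hx, le_antisymm ?_ (ell_le (hlcm_mem hx))⟩
  rw [← hαx]
  exact Nat.le_of_dvd (Nat.lcm_pos (hA α hα) (hX x hx))
    (Nat.lcm_dvd_lcm_of_dvd_left x (hpc.2 α hα))

/-- if `A` is pseudo-cancelable, `X` a nonempty permutation and `B = A·X`,
then `ℓ(A) ∣ ℓ(B)` and some divisor `d` of `ℓ(A)` coprime with `alcm_{ℓ(A)} ℓ(B)` is such
that `d · alcm_{ℓ(A)} ℓ(B)` is an element of `X`. -/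
theorem detach_cycle (A X : Multiset ℕ) (hA : IsPerm A) (hX : IsPerm X)
    (hpc : PseudoCancelable A) (hXne : X ≠ 0) :
    ell A ∣ ell (pmul A X) ∧
    ∃ d : ℕ, d ∣ ell A ∧ Nat.Coprime d (alcm (ell A) (ell (pmul A X))) ∧
      d * alcm (ell A) (ell (pmul A X)) ∈ X := by
  obtain ⟨x, hx, hlcm⟩ := exists_lcm_ell_eq_ell_pmul hA hX hpc hXne
  have ha : ell A ≠ 0 := (hA _ (ell_mem hpc.1)).ne'
  obtain ⟨d, hda, hcop, hdx⟩ := exists_dvd_coprime_mul_alcm_lcm_eq ha (hX x hx).ne'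
  rw [← hlcm]
  exact ⟨Nat.dvd_lcm_left _ _, d, hda, hcop, by rwa [hdx]⟩
end
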